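/- arXiv:1612.04586 — 3 statements merged into one kernel-verified Lean document; each statement's English description precedes it below -/
import Mathlib

section
/- With the notation and hypotheses of the rational-solution setup below, one has the direct sum decomposition 𝔤((z)) = 𝔤[[z]] ∔ W, i.e. 𝔤[[z]] + W = 𝔤((z)) and 𝔤[[z]] ∩ W = 0. -/
open scoped TensorProduct
open Finset

/- We remove two instances that create (non-definitionally-equal) instance diamonds for
`LaurentSeries ℂ`, so that `ℂ((z))` carries its canonical `ℂ`-algebra structure
`HahnSeries.instAlgebra` and the induced `ℂ`-module structure. -/
attribute [-instance] HahnSeries.instModule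
attribute [-instance] HahnSeries.powerSeriesAlgebra

noncomputable section

/-- The field `ℂ((z))` of formal Laurent series. -/
abbrev Kz : Type := LaurentSeries ℂ

/-- The monomial `z^k ∈ ℂ((z))`. -/
def zm (k : ℤ) : Kz := HahnSeries.single k (1 : ℂ)

/-- Extraction of the `k`-th coefficient of a Laurent series, as a `ℂ`-linear map. -/
def coeffL (k : ℤ) : Kz →ₗ[ℂ] ℂ where
  toFun f := f.coeff k
  map_add' f g := by simp
  map_smul' c f := by
    show (c • f).coeff k = c • f.coeff k
    rw [HahnSeries.coeff_smul]

variable (L : Type*) [LieRing L] [LieAlgebra ℂ L]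

/-- The `k`-th coefficient of an element of `𝔤((z)) = ℂ((z)) ⊗ 𝔤`, as an element of `𝔤`. -/
def coeffT (k : ℤ) : (Kz ⊗[ℂ] L) →ₗ[ℂ] L :=
  (TensorProduct.lid ℂ L).toLinearMap ∘ₗ LinearMap.rTensor L (coeffL k)

/-- The subalgebra `𝔤[[z]] ⊆ 𝔤((z))`: elements with vanishing negative coefficients. -/
def gPow : Submodule ℂ (Kz ⊗[ℂ] L) :=
  ⨅ (k : ℤ) (_ : k < 0), LinearMap.ker (coeffT L k)

/-- The residue pairing `κ̄(f,g) = res₀(κ(f,g)dz)` on `𝔤((z))`: the coefficient of `z⁻¹`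
in the base-changed Killing form, so that `κ̄(a z^l, b z^k) = κ(a,b)` if `l+k = −1` and `0`
otherwise. -/
def KB (x y : Kz ⊗[ℂ] L) : ℂ :=
  (((killingForm ℂ L).baseChange Kz) x y).coeff (-1)

variable {L}

/-- The element `f_{k,l} = z^{−k−1} e_l + p_{k,l}(z)` of `𝔤((z))`, where the `𝔤`-valued
polynomial `p_{k,l}` is recorded by its finitely supported family of coefficients
`P k l : ℕ →₀ 𝔤`. -/
def fEl {d : ℕ} (e : Fin d → L) (P : ℕ → Fin d → ℕ →₀ L) (k : ℕ) (l : Fin d) :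
    Kz ⊗[ℂ] L :=
  zm (-(k : ℤ) - 1) ⊗ₜ[ℂ] e l + (P k l).sum fun m a => zm (m : ℤ) ⊗ₜ[ℂ] a

/-- `W ⊆ 𝔤((z))`: the `ℂ`-linear span of the elements `f_{k,l}`. -/
def Wsub {d : ℕ} (e : Fin d → L) (P : ℕ → Fin d → ℕ →₀ L) :
    Submodule ℂ (Kz ⊗[ℂ] L) :=
  Submodule.span ℂ {w | ∃ (k : ℕ) (l : Fin d), w = fEl e P k l}

/-- The polynomial `v(x,y) = Σ_{k=0}^{t} Σ_{l=1}^{d} p_{k,l}(y) ⊗ x^k e_l ∈ (𝔤⊗𝔤)[x,y]`. -/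
def vFun {d : ℕ} (t : ℕ) (e : Fin d → L) (P : ℕ → Fin d → ℕ →₀ L) (x y : ℂ) :
    L ⊗[ℂ] L :=
  ∑ k ∈ range (t + 1), ∑ l : Fin d,
    ((P k l).sum fun m a => y ^ m • a) ⊗ₜ[ℂ] (x ^ k • e l)

/-- The rational r-matrix `r(x,y) = γ/(y−x) + v(x,y)`, where `γ = Σ_l e_l ⊗ e_l`. -/
def rFun {d : ℕ} (t : ℕ) (e : Fin d → L) (P : ℕ → Fin d → ℕ →₀ L) (x y : ℂ) :
    L ⊗[ℂ] L :=
  (y - x)⁻¹ • (∑ l : Fin d, e l ⊗ₜ[ℂ] e l) + vFun t e P x y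

/-!
Modulo `𝔤[[z]]` the element `f_{k,l}` reduces to `z^{-k-1} e_l`, and these elements form a basis
of the principal parts `𝔤((z)) / 𝔤[[z]]`: every Laurent series has only finitely many negative
coefficients, and the coefficients of `z^{-k-1}` of the `f_{k,l}` are the linearly independent
`e_l`. Hence `W` maps isomorphically onto `𝔤((z)) / 𝔤[[z]]`, which is the claimed splitting.
-/

section LaurentPolynomialSplitting

variable {L : Type*} [LieRing L] [LieAlgebra ℂ L]

lemma coeffT_tmul (k : ℤ) (f : Kz) (a : L) :
    coeffT L k (f ⊗ₜ[ℂ] a) = f.coeff k • a := by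
  simp [coeffT, coeffL]

lemma mem_gPow_iff (x : Kz ⊗[ℂ] L) :
    x ∈ gPow L ↔ ∀ k : ℤ, k < 0 → coeffT L k x = 0 := by
  simp [gPow, Submodule.mem_iInf, LinearMap.mem_ker]

lemma tmul_mem_gPow {f : Kz} (hf : ∀ k : ℤ, k < 0 → f.coeff k = 0) (a : L) :
    f ⊗ₜ[ℂ] a ∈ gPow L :=
  (mem_gPow_iff _).mpr fun k hk => by rw [coeffT_tmul, hf k hk, zero_smul]

lemma finsuppSum_zm_tmul_mem_gPow (p : ℕ →₀ L) :
    (p.sum fun m a => zm (m : ℤ) ⊗ₜ[ℂ] a) ∈ gPow L :=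
  Submodule.finsuppSum_mem _ _ _ _ fun m _ =>
    tmul_mem_gPow (fun k hk => HahnSeries.coeff_single_of_ne (by omega)) _

lemma single_tmul_eq_zm_tmul (m : ℤ) (c : ℂ) (a : L) :
    (HahnSeries.single m c : Kz) ⊗ₜ[ℂ] a = zm m ⊗ₜ[ℂ] (c • a) := by
  rw [← TensorProduct.smul_tmul]
  congr 1
  ext k
  rw [HahnSeries.coeff_smul, zm, HahnSeries.coeff_single, HahnSeries.coeff_single]
  split <;> simp

lemma tmul_mem_of_gPow_le {S : Submodule ℂ (Kz ⊗[ℂ] L)} (hS : gPow L ≤ S)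
    (hzm : ∀ (n : ℕ) (a : L), zm (-(n : ℤ) - 1) ⊗ₜ[ℂ] a ∈ S) (N : ℕ) :
    ∀ f : Kz, (∀ k : ℤ, k < -(N : ℤ) → f.coeff k = 0) → ∀ a : L, f ⊗ₜ[ℂ] a ∈ S := by
  induction N with
  | zero => exact fun f hf a => hS (tmul_mem_gPow (by simpa using hf) a)
  | succ N ih =>
    intro f hf a
    set g : Kz := f - HahnSeries.single (-(N : ℤ) - 1) (f.coeff (-(N : ℤ) - 1))
    have hg : ∀ k : ℤ, k < -(N : ℤ) → g.coeff k = 0 := by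
      intro k hk
      rw [HahnSeries.coeff_sub, HahnSeries.coeff_single]
      split
      · simp_all
      · rw [hf k (by omega), sub_zero]
    have hsplit : f = g + HahnSeries.single (-(N : ℤ) - 1) (f.coeff (-(N : ℤ) - 1)) := by
      simp [g]
    rw [hsplit, TensorProduct.add_tmul, single_tmul_eq_zm_tmul]
    exact add_mem (ih g hg a) (hzm N _)

lemma eq_top_of_gPow_le {S : Submodule ℂ (Kz ⊗[ℂ] L)} (hS : gPow L ≤ S)
    (hzm : ∀ (n : ℕ) (a : L), zm (-(n : ℤ) - 1) ⊗ₜ[ℂ] a ∈ S) : S = ⊤ := by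
  rw [eq_top_iff]
  rintro x -
  induction x using TensorProduct.induction_on with
  | zero => exact zero_mem S
  | tmul f a =>
    refine tmul_mem_of_gPow_le hS hzm (-f.order).toNat f (fun k hk => ?_) a
    exact HahnSeries.coeff_eq_zero_of_lt_order (by omega)
  | add x y hx hy => exact add_mem hx hy

def principalCoeffs : (Kz ⊗[ℂ] L) →ₗ[ℂ] (ℕ → L) :=
  LinearMap.pi fun n : ℕ => coeffT L (-(n : ℤ) - 1)

lemma gPow_le_ker_principalCoeffs : gPow L ≤ LinearMap.ker (principalCoeffs (L := L)) :=
  fun x hx => funext fun n => (mem_gPow_iff x).mp hx _ (by omega)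

variable {d : ℕ} (e : Fin d → L) (P : ℕ → Fin d → ℕ →₀ L)

lemma principalCoeffs_fEl (k : ℕ) (l : Fin d) :
    principalCoeffs (fEl e P k l) = Pi.single k (e l) := by
  funext n
  have hpoly := (mem_gPow_iff _).mp (finsuppSum_zm_tmul_mem_gPow (P k l)) (-(n : ℤ) - 1)
    (by omega)
  have hpole : -(n : ℤ) - 1 = -(k : ℤ) - 1 ↔ n = k := by omega
  rw [principalCoeffs, LinearMap.pi_apply, fEl, map_add, hpoly, add_zero, coeffT_tmul, zm,
    HahnSeries.coeff_single, Pi.single_apply]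
  simp only [hpole]
  split_ifs <;> simp

lemma Wsub_eq_span_range :
    Wsub e P = Submodule.span ℂ (Set.range fun p : ℕ × Fin d => fEl e P p.1 p.2) := by
  rw [Wsub]
  congr 1
  ext w
  simp [eq_comm]

lemma disjoint_gPow_Wsub (he : LinearIndependent ℂ e) : Disjoint (gPow L) (Wsub e P) := by
  have hind : LinearIndependent ℂ (principalCoeffs ∘ fun p : ℕ × Fin d => fEl e P p.1 p.2) := by
    have := (Pi.linearIndependent_single (fun (_ : ℕ) => e) fun _ => he).comp
      (Equiv.sigmaEquivProd ℕ (Fin d)).symm (Equiv.injective _)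
    simpa [Function.comp_def, principalCoeffs_fEl] using this
  rw [Wsub_eq_span_range]
  exact ((Submodule.range_ker_disjoint hind).mono_right gPow_le_ker_principalCoeffs).symm

lemma zm_tmul_mem_gPow_sup_Wsub (he : Submodule.span ℂ (Set.range e) = ⊤) (n : ℕ) (a : L) :
    zm (-(n : ℤ) - 1) ⊗ₜ[ℂ] a ∈ gPow L ⊔ Wsub e P := by
  suffices Submodule.span ℂ (Set.range e) ≤
      (gPow L ⊔ Wsub e P).comap (TensorProduct.mk ℂ Kz L (zm (-(n : ℤ) - 1))) by
    exact this (he ▸ Submodule.mem_top)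
  refine Submodule.span_le.mpr ?_
  rintro _ ⟨l, rfl⟩
  have hsplit : zm (-(n : ℤ) - 1) ⊗ₜ[ℂ] e l
      = fEl e P n l - (P n l).sum fun m a => zm (m : ℤ) ⊗ₜ[ℂ] a := by
    rw [fEl]
    abel
  -- `sub_mem` cannot see the `AddCommGroup` instance behind this `Submodule`, hence `-1 •`
  rw [SetLike.mem_coe, Submodule.mem_comap, TensorProduct.mk_apply, hsplit, sub_eq_add_neg,
    ← neg_one_smul ℂ]
  exact add_mem (Submodule.mem_sup_right (Submodule.subset_span ⟨n, l, rfl⟩))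
    (Submodule.smul_mem _ _ (Submodule.mem_sup_left (finsuppSum_zm_tmul_mem_gPow _)))

theorem isCompl_gPow_Wsub (b : Module.Basis (Fin d) ℂ L) : IsCompl (gPow L) (Wsub b P) where
  disjoint := disjoint_gPow_Wsub b P b.linearIndependent
  codisjoint := codisjoint_iff.mpr <|
    eq_top_of_gPow_le le_sup_left (zm_tmul_mem_gPow_sup_Wsub b P b.span_eq)

end LaurentPolynomialSplitting

theorem statement7_general
    (L : Type*) [LieRing L] [LieAlgebra ℂ L]
    (d : ℕ) (e : Module.Basis (Fin d) ℂ L)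
    (P : ℕ → Fin d → ℕ →₀ L)
    :
    gPow L ⊔ Wsub ⇑e P = ⊤ ∧ gPow L ⊓ Wsub ⇑e P = ⊥ :=
  ⟨(isCompl_gPow_Wsub P e).sup_eq_top, (isCompl_gPow_Wsub P e).inf_eq_bot⟩

/-- For a non-degenerate skew-symmetric rational solution
`r(x,y) = γ/(y−x) + v(x,y)` of the classical Yang–Baxter equation one has the direct sum
decomposition `𝔤((z)) = 𝔤[[z]] ∔ W`. -/
theorem statement7
    (L : Type*) [LieRing L] [LieAlgebra ℂ L]
    [Module.Finite ℂ L] [LieAlgebra.IsSimple ℂ L]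
    (d t : ℕ) (e : Module.Basis (Fin d) ℂ L)
    (horth : ∀ i j, killingForm ℂ L (e i) (e j) = if i = j then 1 else 0)
    (P : ℕ → Fin d → ℕ →₀ L)
    (hPtop : ∀ k l, t < k → P k l = 0)
    (hPdeg : t ≠ 0 → ∃ l, P t l ≠ 0)
    (B1213 B1223 B1323 :
      (L ⊗[ℂ] L) →ₗ[ℂ] (L ⊗[ℂ] L) →ₗ[ℂ] (L ⊗[ℂ] (L ⊗[ℂ] L)))
    (hB1213 : ∀ a b c dd : L,
      B1213 (a ⊗ₜ[ℂ] b) (c ⊗ₜ[ℂ] dd) = ⁅a, c⁆ ⊗ₜ[ℂ] (b ⊗ₜ[ℂ] dd))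
    (hB1223 : ∀ a b c dd : L,
      B1223 (a ⊗ₜ[ℂ] b) (c ⊗ₜ[ℂ] dd) = a ⊗ₜ[ℂ] (⁅b, c⁆ ⊗ₜ[ℂ] dd))
    (hB1323 : ∀ a b c dd : L,
      B1323 (a ⊗ₜ[ℂ] b) (c ⊗ₜ[ℂ] dd) = a ⊗ₜ[ℂ] (c ⊗ₜ[ℂ] ⁅b, dd⁆))
    (hskew : ∀ x y : ℂ, x ≠ y →
      rFun t ⇑e P x y = - (TensorProduct.comm ℂ L L (rFun t ⇑e P y x)))
    (hCYBE : ∀ x₁ x₂ x₃ : ℂ, x₁ ≠ x₂ → x₁ ≠ x₃ → x₂ ≠ x₃ →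
      B1213 (rFun t ⇑e P x₁ x₂) (rFun t ⇑e P x₁ x₃)
        + B1223 (rFun t ⇑e P x₁ x₂) (rFun t ⇑e P x₂ x₃)
        + B1323 (rFun t ⇑e P x₁ x₃) (rFun t ⇑e P x₂ x₃) = 0)
    :
    gPow L ⊔ Wsub ⇑e P = ⊤ ∧ gPow L ⊓ Wsub ⇑e P = ⊥ :=
  statement7_general L d e P

end
end

section
/- Let 𝔤 be a finite-dimensional complex simple Lie algebra with Casimir element γ, let v ∈ (𝔤⊗𝔤)[x,y] be a polynomial, and set r(x,y) = γ/(y−x) + v(x,y) for x ≠ y. Then for every polynomial f ∈ 𝔤[z] there exists a polynomial w ∈ (𝔤⊗𝔤)[x,y] such that for all x ≠ y in ℂ one has ad₁(f(x))(r(x,y)) + ad₂(f(y))(r(x,y)) = w(x,y); that is, the cobracket θ(f)(x,y) = [f(x)⊗1 + 1⊗f(y), r(x,y)] has no pole along the diagonal and is polynomial. -/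
open scoped TensorProduct
open Finset

/-!
The Killing form is invariant, so the Casimir element is `ad`-invariant:
`ad₁(c) γ = -ad₂(c) γ`. Hence the singular part of `θ(f)(x,y)` is
`ad₂(f(y) - f(x)) γ / (y - x)`, which is polynomial because `(y^m - x^m)/(y - x)` is a
geometric sum; the remaining part `ad₁(f(x)) v + ad₂(f(y)) v` is visibly polynomial.
-/

section PolyFun

variable {R T : Type*} [CommSemiring R] [AddCommMonoid T] [Module R T]

theorem sum_range_sum_range_eq_of_le {N N' : ℕ} (h : N ≤ N') (g : ℕ → ℕ → T) :
    ∑ i ∈ range (N + 1), ∑ j ∈ range (N + 1), g i j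
      = ∑ i ∈ range (N' + 1), ∑ j ∈ range (N' + 1), if i ≤ N ∧ j ≤ N then g i j else 0 := by
  rw [← sum_product', ← sum_product', ← sum_filter]
  congr 1
  ext ⟨i, j⟩
  simp only [mem_product, mem_range, mem_filter]
  omega

variable (R T) in
def polyFun₂ : Submodule R (R → R → T) where
  carrier := {w | ∃ (N : ℕ) (C : ℕ → ℕ → T), ∀ x y,
    w x y = ∑ i ∈ range (N + 1), ∑ j ∈ range (N + 1), (x ^ i * y ^ j) • C i j}
  zero_mem' := ⟨0, 0, by simp⟩
  add_mem' := by
    rintro w₁ w₂ ⟨N₁, C₁, h₁⟩ ⟨N₂, C₂, h₂⟩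
    refine ⟨max N₁ N₂, fun i j => (if i ≤ N₁ ∧ j ≤ N₁ then C₁ i j else 0)
      + (if i ≤ N₂ ∧ j ≤ N₂ then C₂ i j else 0), fun x y => ?_⟩
    rw [Pi.add_apply, Pi.add_apply, h₁, h₂,
      sum_range_sum_range_eq_of_le (le_max_left N₁ N₂),
      sum_range_sum_range_eq_of_le (le_max_right N₁ N₂), ← sum_add_distrib]
    refine sum_congr rfl fun i _ => ?_
    rw [← sum_add_distrib]
    refine sum_congr rfl fun j _ => ?_
    simp only [smul_add, smul_ite, smul_zero]
  smul_mem' := by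
    rintro c w ⟨N, C, h⟩
    refine ⟨N, c • C, fun x y => ?_⟩
    simp only [Pi.smul_apply, h, smul_sum, smul_comm c]

theorem monomial_mem_polyFun₂ (a b : ℕ) (t : T) :
    (fun x y : R => (x ^ a * y ^ b) • t) ∈ polyFun₂ R T := by
  refine ⟨a + b, fun i j => if i = a ∧ j = b then t else 0, fun x y => ?_⟩
  have ha : a ∈ range (a + b + 1) := by simp only [mem_range]; omega
  have hb : b ∈ range (a + b + 1) := by simp only [mem_range]; omega
  simp [smul_ite, ite_and, ha, hb]

theorem monomial_smul_mem_polyFun₂ (a b : ℕ) {w : R → R → T} (hw : w ∈ polyFun₂ R T) :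
    (fun x y => (x ^ a * y ^ b) • w x y) ∈ polyFun₂ R T := by
  obtain ⟨N, C, h⟩ := hw
  have : (fun x y => (x ^ a * y ^ b) • w x y) = ∑ i ∈ range (N + 1), ∑ j ∈ range (N + 1),
      fun x y : R => (x ^ (a + i) * y ^ (b + j)) • C i j := by
    ext x y
    simp only [h, smul_sum, smul_smul, Finset.sum_apply]
    ring_nf
  rw [this]
  exact sum_mem fun i _ => sum_mem fun j _ => monomial_mem_polyFun₂ _ _ _

theorem sum_mem_polyFun₂ {ι : Type*} (S : Finset ι) {w : ι → R → R → T}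
    (hw : ∀ s ∈ S, w s ∈ polyFun₂ R T) : (fun x y => ∑ s ∈ S, w s x y) ∈ polyFun₂ R T := by
  convert Submodule.sum_mem _ hw
  simp only [Finset.sum_apply]

theorem comp_mem_polyFun₂ {U : Type*} [AddCommMonoid U] [Module R U] (φ : T →ₗ[R] U)
    {w : R → R → T} (hw : w ∈ polyFun₂ R T) : (fun x y => φ (w x y)) ∈ polyFun₂ R U := by
  obtain ⟨N, C, h⟩ := hw
  exact ⟨N, fun i j => φ (C i j), fun x y => by simp [h]⟩

end PolyFun


section Casimir

variable {R L ι : Type*} [CommRing R] [AddCommGroup L] [Module R L] [Fintype ι] [DecidableEq ι]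
  {B : L →ₗ[R] L →ₗ[R] R} {e : Module.Basis ι R L}

theorem Module.Basis.apply_eq_repr_of_orthonormal
    (he : ∀ i j, B (e i) (e j) = if i = j then 1 else 0) (a : L) (m : ι) :
    B a (e m) = e.repr a m := by
  conv_lhs => rw [← e.sum_repr a]
  simp only [map_sum, map_smul, LinearMap.sum_apply, LinearMap.smul_apply, he, smul_eq_mul,
    mul_ite, mul_one, mul_zero, sum_ite_eq', mem_univ, if_true]

theorem rTensor_casimir_eq_lTensor (he : ∀ i j, B (e i) (e j) = if i = j then 1 else 0)
    {f g : L →ₗ[R] L} (hfg : ∀ a b, B (f a) b = B (g b) a) :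
    LinearMap.rTensor L f (∑ l, e l ⊗ₜ[R] e l) = LinearMap.lTensor L g (∑ l, e l ⊗ₜ[R] e l) := by
  have expand : ∀ a : L, a = ∑ m, B a (e m) • e m := fun a => by
    simp only [e.apply_eq_repr_of_orthonormal he, e.sum_repr]
  have expand_left : ∀ a b : L, a ⊗ₜ[R] b = ∑ m, B a (e m) • (e m ⊗ₜ[R] b) := fun a b => by
    simp_rw [TensorProduct.smul_tmul', ← TensorProduct.sum_tmul, ← expand]
  have expand_right : ∀ a b : L, a ⊗ₜ[R] b = ∑ m, B b (e m) • (a ⊗ₜ[R] e m) := fun a b => by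
    simp_rw [← TensorProduct.tmul_smul, ← TensorProduct.tmul_sum, ← expand]
  simp only [map_sum, LinearMap.rTensor_tmul, LinearMap.lTensor_tmul]
  conv_lhs => enter [2, l]; rw [expand_left]
  conv_rhs => enter [2, l]; rw [expand_right]
  rw [sum_comm]
  simp only [hfg]

end Casimir

section LieAlgebra

variable {R L : Type*} [CommRing R] [LieRing L] [LieAlgebra R L]

variable (R L) in
def ad₁ : L →ₗ[R] Module.End R (L ⊗[R] L) :=
  LinearMap.rTensorHom L ∘ₗ (LieAlgebra.ad R L : L →ₗ[R] Module.End R L)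

variable (R L) in
def ad₂ : L →ₗ[R] Module.End R (L ⊗[R] L) :=
  LinearMap.lTensorHom L ∘ₗ (LieAlgebra.ad R L : L →ₗ[R] Module.End R L)

theorem ad₁_casimir_add_ad₂_casimir {ι : Type*} [Fintype ι] [DecidableEq ι]
    {B : L →ₗ[R] L →ₗ[R] R} (hB : ∀ x y z, B ⁅x, y⁆ z = B x ⁅y, z⁆)
    {e : Module.Basis ι R L} (he : ∀ i j, B (e i) (e j) = if i = j then 1 else 0) (c : L) :
    ad₁ R L c (∑ l, e l ⊗ₜ[R] e l) + ad₂ R L c (∑ l, e l ⊗ₜ[R] e l) = 0 := by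
  have hskew : ∀ a b, B ⁅c, a⁆ b = B (-⁅c, b⁆) a := fun a b => by
    rw [hB, map_neg, LinearMap.neg_apply, hB, ← map_neg, lie_skew]
  change LinearMap.rTensor L (LieAlgebra.ad R L c) _ + _ = _
  rw [rTensor_casimir_eq_lTensor (g := -LieAlgebra.ad R L c) he hskew, LinearMap.lTensor_neg]
  exact neg_add_cancel _

end LieAlgebra

theorem inv_sub_smul_sum_pow_smul_sub {K V : Type*} [Field K] [AddCommGroup V] [Module K V]
    {x y : K} (h : x ≠ y) (s : Finset ℕ) (t : ℕ → V) :
    (y - x)⁻¹ • (∑ m ∈ s, y ^ m • t m - ∑ m ∈ s, x ^ m • t m)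
      = ∑ m ∈ s, ∑ k ∈ range m, (x ^ (m - 1 - k) * y ^ k) • t m := by
  rw [← sum_sub_distrib, smul_sum]
  refine sum_congr rfl fun m _ => ?_
  rw [← sub_smul, smul_smul, ← geom_sum₂_mul, mul_comm,
    mul_inv_cancel_right₀ (sub_ne_zero.mpr h.symm), sum_smul]
  simp only [mul_comm]

theorem statement15_general
    (L : Type*) [LieRing L] [LieAlgebra ℂ L]
    [Module.Finite ℂ L]
    (d : ℕ) (e : Module.Basis (Fin d) ℂ L)
    (horth : ∀ i j, killingForm ℂ L (e i) (e j) = if i = j then 1 else 0)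
    (Nv : ℕ) (V : ℕ → ℕ → L ⊗[ℂ] L)
    (v : ℂ → ℂ → L ⊗[ℂ] L)
    (hv : ∀ x y : ℂ, v x y =
      ∑ i ∈ range (Nv + 1), ∑ j ∈ range (Nv + 1), (x ^ i * y ^ j) • V i j)
    (r : ℂ → ℂ → L ⊗[ℂ] L)
    (hr : ∀ x y : ℂ, r x y = (y - x)⁻¹ • (∑ l : Fin d, e l ⊗ₜ[ℂ] e l) + v x y)
    (M : ℕ) (F : ℕ → L)
    (f : ℂ → L)
    (hf : ∀ x : ℂ, f x = ∑ m ∈ range (M + 1), x ^ m • F m) :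
    ∃ (Nw : ℕ) (C : ℕ → ℕ → L ⊗[ℂ] L),
      ∀ x y : ℂ, x ≠ y →
        LinearMap.rTensor L (LieAlgebra.ad ℂ L (f x)) (r x y)
            + LinearMap.lTensor L (LieAlgebra.ad ℂ L (f y)) (r x y)
          = ∑ i ∈ range (Nw + 1), ∑ j ∈ range (Nw + 1), (x ^ i * y ^ j) • C i j := by
  set γ := ∑ l : Fin d, e l ⊗ₜ[ℂ] e l
  have hγ (c : L) : ad₁ ℂ L c γ = -ad₂ ℂ L c γ :=
    eq_neg_of_add_eq_zero_left <|
      ad₁_casimir_add_ad₂_casimir (LieModule.traceForm_apply_lie_apply ℂ L L) horth c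
  set w : ℂ → ℂ → L ⊗[ℂ] L := fun x y => ∑ m ∈ range (M + 1),
    (∑ k ∈ range m, (x ^ (m - 1 - k) * y ^ k) • ad₂ ℂ L (F m) γ
      + ((x ^ m * y ^ 0) • ad₁ ℂ L (F m) (v x y) + (x ^ 0 * y ^ m) • ad₂ ℂ L (F m) (v x y)))
  have hw : w ∈ polyFun₂ ℂ (L ⊗[ℂ] L) := by
    have hv : v ∈ polyFun₂ ℂ (L ⊗[ℂ] L) := ⟨Nv, V, hv⟩
    refine sum_mem_polyFun₂ _ fun m _ => add_mem ?_ (add_mem ?_ ?_)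
    · exact sum_mem_polyFun₂ _ fun k _ => monomial_mem_polyFun₂ _ _ _
    · exact monomial_smul_mem_polyFun₂ _ _ (comp_mem_polyFun₂ _ hv)
    · exact monomial_smul_mem_polyFun₂ _ _ (comp_mem_polyFun₂ _ hv)
  obtain ⟨N, C, hC⟩ := hw
  refine ⟨N, C, fun x y hxy => Eq.trans ?_ (hC x y)⟩
  change ad₁ ℂ L (f x) (r x y) + ad₂ ℂ L (f y) (r x y) = w x y
  rw [hr, map_add, map_add, map_smul, map_smul, hγ, add_add_add_comm, ← smul_add,
    neg_add_eq_sub, hf x, hf y]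
  simp only [map_sum, map_smul, LinearMap.sum_apply, LinearMap.smul_apply,
    inv_sub_smul_sum_pow_smul_sub hxy, w, pow_zero, mul_one, one_mul, sum_add_distrib]

/-- For a finite-dimensional complex simple Lie algebra `𝔤` with Casimir
element `γ`, a polynomial `v ∈ (𝔤⊗𝔤)[x,y]` and `r(x,y) = γ/(y−x) + v(x,y)`, the cobracket
`θ(f)(x,y) = [f(x)⊗1 + 1⊗f(y), r(x,y)]` of every polynomial `f ∈ 𝔤[z]` has no pole along
the diagonal: it is given by a polynomial `w ∈ (𝔤⊗𝔤)[x,y]`.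
Here `ad₁(c) = c ⨁ 0` acts on the first tensor factor (`LinearMap.rTensor`) and
`ad₂(c)` on the second one (`LinearMap.lTensor`). -/
theorem statement15
    (L : Type*) [LieRing L] [LieAlgebra ℂ L]
    [Module.Finite ℂ L] [LieAlgebra.IsSimple ℂ L]
    (d : ℕ) (e : Module.Basis (Fin d) ℂ L)
    (horth : ∀ i j, killingForm ℂ L (e i) (e j) = if i = j then 1 else 0)
    (Nv : ℕ) (V : ℕ → ℕ → L ⊗[ℂ] L)
    (v : ℂ → ℂ → L ⊗[ℂ] L)
    (hv : ∀ x y : ℂ, v x y =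
      ∑ i ∈ range (Nv + 1), ∑ j ∈ range (Nv + 1), (x ^ i * y ^ j) • V i j)
    (r : ℂ → ℂ → L ⊗[ℂ] L)
    (hr : ∀ x y : ℂ, r x y = (y - x)⁻¹ • (∑ l : Fin d, e l ⊗ₜ[ℂ] e l) + v x y)
    (M : ℕ) (F : ℕ → L)
    (f : ℂ → L)
    (hf : ∀ x : ℂ, f x = ∑ m ∈ range (M + 1), x ^ m • F m) :
    ∃ (Nw : ℕ) (C : ℕ → ℕ → L ⊗[ℂ] L),
      ∀ x y : ℂ, x ≠ y →
        LinearMap.rTensor L (LieAlgebra.ad ℂ L (f x)) (r x y)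
            + LinearMap.lTensor L (LieAlgebra.ad ℂ L (f y)) (r x y)
          = ∑ i ∈ range (Nw + 1), ∑ j ∈ range (Nw + 1), (x ^ i * y ^ j) • C i j :=
  statement15_general L d e horth Nv V v hv r hr M F f hf
end

section
/- Let 𝔤 = 𝔰𝔩₂(ℂ) with standard basis h, e, f. Baxter's trigonometric solution ρ(z) = (cos z/(2 sin z))·h⊗h + (1/ sin z)·(e⊗f + f⊗e) satisfies the classical Yang–Baxter equation with one spectral parameter: for all x, y ∈ ℂ with sin x ≠ 0, sin y ≠ 0 and sin(x+y) ≠ 0, one has [ρ(x), ρ(x+y)]^{12,13} + [ρ(x+y), ρ(y)]^{13,23} + [ρ(x), ρ(y)]^{12,23} = 0. -/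
open scoped TensorProduct
open Matrix

noncomputable section

/-- The Lie algebra of `2 × 2` complex matrices (ambient algebra of `𝔰𝔩₂(ℂ)`). -/
abbrev M2 : Type := Matrix (Fin 2) (Fin 2) ℂ

/-- `h = e₁₁ - e₂₂`. -/
def hM : M2 := single 0 0 1 - single 1 1 1

/-- `e = e₁₂`. -/
def eM : M2 := single 0 1 1

/-- `f = e₂₁`. -/
def fM : M2 := single 1 0 1

/-- Baxter's trigonometric solution
`ρ(z) = (cos z/(2 sin z))·h⊗h + (1/sin z)·(e⊗f + f⊗e)` for `𝔰𝔩₂(ℂ)`. -/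
def ρBaxter (z : ℂ) : M2 ⊗[ℂ] M2 :=
  (Complex.cos z / (2 * Complex.sin z)) • (hM ⊗ₜ[ℂ] hM)
    + (Complex.sin z)⁻¹ • (eM ⊗ₜ[ℂ] fM + fM ⊗ₜ[ℂ] eM)

/-! Each `ρ(z)` is of the form `p • h⊗h + q • (e⊗f + f⊗e)`. Since
`[h, e] = 2e`, `[h, f] = -2f` and `[e, f] = h`, the Yang–Baxter sum of three such tensors with
coefficients `(p, q)`, `(P, Q)`, `(r, s)` has only six nonzero coordinates, and they vanish as soon
as `2Q(p + r) = qs`, `2s(p - P) = qQ` and `2q(r - P) = Qs`. For Baxter's coefficients these are the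
addition formulas `cot x + cot y = sin (x + y) / (sin x sin y)` and
`cot x - cot (x + y) = sin y / (sin x sin (x + y))`. -/

section

-- `Matrix` only carries the commutator bracket; this instance gives it the Lie ring API.
attribute [local instance 100] LieRing.ofAssociativeRing

lemma lie_hM_eM : ⁅hM, eM⁆ = (2 : ℂ) • eM := by
  ext i j; fin_cases i <;> fin_cases j <;> norm_num [hM, eM, Ring.lie_def, mul_apply, single_apply]

lemma lie_hM_fM : ⁅hM, fM⁆ = (-2 : ℂ) • fM := by
  ext i j; fin_cases i <;> fin_cases j <;> norm_num [hM, fM, Ring.lie_def, mul_apply, single_apply]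

lemma lie_eM_fM : ⁅eM, fM⁆ = hM := by
  ext i j; fin_cases i <;> fin_cases j <;>
    norm_num [hM, eM, fM, Ring.lie_def, mul_apply, single_apply]

lemma lie_eM_hM : ⁅eM, hM⁆ = (-2 : ℂ) • eM := by rw [← lie_skew, lie_hM_eM, neg_smul]

lemma lie_fM_hM : ⁅fM, hM⁆ = (2 : ℂ) • fM := by rw [← lie_skew, lie_hM_fM, neg_smul, neg_neg]

lemma lie_fM_eM : ⁅fM, eM⁆ = -hM := by rw [← lie_skew, lie_eM_fM]

def hhEfTensor (p q : ℂ) : M2 ⊗[ℂ] M2 :=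
  p • (hM ⊗ₜ[ℂ] hM) + q • (eM ⊗ₜ[ℂ] fM + fM ⊗ₜ[ℂ] eM)

lemma ρBaxter_eq_hhEfTensor (z : ℂ) :
    ρBaxter z = hhEfTensor (Complex.cos z / (2 * Complex.sin z)) (Complex.sin z)⁻¹ :=
  rfl

variable (B1213 B1223 B1323 :
      (M2 ⊗[ℂ] M2) →ₗ[ℂ] (M2 ⊗[ℂ] M2) →ₗ[ℂ] (M2 ⊗[ℂ] (M2 ⊗[ℂ] M2)))
    (hB1213 : ∀ a b c d : M2, B1213 (a ⊗ₜ[ℂ] b) (c ⊗ₜ[ℂ] d) = ⁅a, c⁆ ⊗ₜ[ℂ] (b ⊗ₜ[ℂ] d))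
    (hB1223 : ∀ a b c d : M2, B1223 (a ⊗ₜ[ℂ] b) (c ⊗ₜ[ℂ] d) = a ⊗ₜ[ℂ] (⁅b, c⁆ ⊗ₜ[ℂ] d))
    (hB1323 : ∀ a b c d : M2, B1323 (a ⊗ₜ[ℂ] b) (c ⊗ₜ[ℂ] d) = a ⊗ₜ[ℂ] (c ⊗ₜ[ℂ] ⁅b, d⁆))

include hB1213 hB1223 hB1323 in
lemma cybe_hhEfTensor {p q P Q r s : ℂ}
    (h₁ : 2 * Q * (p + r) = q * s) (h₂ : 2 * s * (p - P) = q * Q) (h₃ : 2 * q * (r - P) = Q * s) :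
    B1213 (hhEfTensor p q) (hhEfTensor P Q) + B1323 (hhEfTensor P Q) (hhEfTensor r s)
      + B1223 (hhEfTensor p q) (hhEfTensor r s) = 0 := by
  simp only [hhEfTensor, map_add, _root_.map_smul, LinearMap.add_apply, LinearMap.smul_apply,
    hB1213, hB1223, hB1323, lie_hM_eM, lie_hM_fM, lie_eM_fM, lie_eM_hM, lie_fM_hM, lie_fM_eM,
    lie_self, TensorProduct.zero_tmul, TensorProduct.tmul_zero, TensorProduct.smul_tmul,
    TensorProduct.tmul_smul, TensorProduct.tmul_neg, TensorProduct.neg_tmul,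
    smul_add, smul_neg, smul_smul, add_zero, zero_add, smul_zero]
  match_scalars
  · linear_combination h₃
  · linear_combination -h₃
  · linear_combination h₁
  · linear_combination h₂
  · linear_combination -h₁
  · linear_combination -h₂

end

/-- Baxter's trigonometric solution satisfies the classical Yang–Baxter
equation with one spectral parameter. -/
theorem statement16
    (B1213 B1223 B1323 :
      (M2 ⊗[ℂ] M2) →ₗ[ℂ] (M2 ⊗[ℂ] M2) →ₗ[ℂ] (M2 ⊗[ℂ] (M2 ⊗[ℂ] M2)))
    (hB1213 : ∀ a b c d : M2,
      B1213 (a ⊗ₜ[ℂ] b) (c ⊗ₜ[ℂ] d) = ⁅a, c⁆ ⊗ₜ[ℂ] (b ⊗ₜ[ℂ] d))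
    (hB1223 : ∀ a b c d : M2,
      B1223 (a ⊗ₜ[ℂ] b) (c ⊗ₜ[ℂ] d) = a ⊗ₜ[ℂ] (⁅b, c⁆ ⊗ₜ[ℂ] d))
    (hB1323 : ∀ a b c d : M2,
      B1323 (a ⊗ₜ[ℂ] b) (c ⊗ₜ[ℂ] d) = a ⊗ₜ[ℂ] (c ⊗ₜ[ℂ] ⁅b, d⁆))
    :
    ∀ x y : ℂ, Complex.sin x ≠ 0 → Complex.sin y ≠ 0 → Complex.sin (x + y) ≠ 0 →
      B1213 (ρBaxter x) (ρBaxter (x + y)) + B1323 (ρBaxter (x + y)) (ρBaxter y)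
        + B1223 (ρBaxter x) (ρBaxter y) = 0 := by
  intro x y hx hy hxy
  have hsin_y := Complex.sin_sub (x + y) x
  have hsin_x := Complex.sin_sub (x + y) y
  rw [add_sub_cancel_left] at hsin_y
  rw [add_sub_cancel_right] at hsin_x
  simp only [ρBaxter_eq_hhEfTensor]
  apply cybe_hhEfTensor B1213 B1223 B1323 hB1213 hB1223 hB1323 <;> field_simp
  · linear_combination -Complex.sin_add x y
  · linear_combination -hsin_y
  · linear_combination -hsin_x

end
end
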